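/- arXiv:cs/0611142 — 3 statements merged into one kernel-verified Lean document; each statement's English description precedes it below -/
import Mathlib

section
/- For the free-symbol intruder I_g whose only rule deduces g(x₁,x₂,y₁,y₂) from x₁,x₂,y₁,y₂: if a term g(t₁,t₂,t₃,t₄) is derivable from a set E of terms and g(t₁,t₂,t₃,t₄) is not a syntactic subterm of any term of E, then each of t₁, t₂, t₃, t₄ is derivable from E. -/
/-- Terms built from atoms and a single free 4-ary constructor `g`. -/
inductive GTerm (A : Type) : Type where
  | atom : A → GTerm A
  | g : GTerm A → GTerm A → GTerm A → GTerm A → GTerm A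

/-- Syntactic subterm relation: `IsSub s t` means `s` is a syntactic subterm of `t`. -/
inductive IsSub {A : Type} : GTerm A → GTerm A → Prop where
  | refl (t : GTerm A) : IsSub t t
  | g₁ {s t₁ t₂ t₃ t₄ : GTerm A} : IsSub s t₁ → IsSub s (.g t₁ t₂ t₃ t₄)
  | g₂ {s t₁ t₂ t₃ t₄ : GTerm A} : IsSub s t₂ → IsSub s (.g t₁ t₂ t₃ t₄)
  | g₃ {s t₁ t₂ t₃ t₄ : GTerm A} : IsSub s t₃ → IsSub s (.g t₁ t₂ t₃ t₄)
  | g₄ {s t₁ t₂ t₃ t₄ : GTerm A} : IsSub s t₄ → IsSub s (.g t₁ t₂ t₃ t₄)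

/-- One deduction step of the `I_g` intruder: from `x₁,x₂,y₁,y₂` deduce
`g(x₁,x₂,y₁,y₂)`. -/
inductive GStep {A : Type} : Set (GTerm A) → Set (GTerm A) → Prop where
  | mk {E : Set (GTerm A)} {u₁ u₂ u₃ u₄ : GTerm A} :
      u₁ ∈ E → u₂ ∈ E → u₃ ∈ E → u₄ ∈ E → GStep E (E ∪ {.g u₁ u₂ u₃ u₄})

/-- `t` is derivable from `E` by the `I_g` intruder. -/
def GDerivable {A : Type} (E : Set (GTerm A)) (t : GTerm A) : Prop :=
  ∃ F, Relation.ReflTransGen GStep E F ∧ t ∈ F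

lemma g_mem_aux {A : Type} {E F : Set (GTerm A)}
    (h : Relation.ReflTransGen GStep E F) :
    ∀ t₁ t₂ t₃ t₄ : GTerm A, (GTerm.g t₁ t₂ t₃ t₄) ∈ F →
      (GTerm.g t₁ t₂ t₃ t₄) ∈ E ∨
      (GDerivable E t₁ ∧ GDerivable E t₂ ∧ GDerivable E t₃ ∧ GDerivable E t₄) := by
  induction h with
  | refl => intro _ _ _ _ h; exact Or.inl h
  | tail hEF hstep ih =>
    intro t₁ t₂ t₃ t₄ hmem
    cases hstep with
    | @mk u₁ u₂ u₃ u₄ h1 h2 h3 h4 =>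
      rcases hmem with hmem | hmem
      · exact ih t₁ t₂ t₃ t₄ hmem
      · simp only [Set.mem_singleton_iff] at hmem
        injection hmem with e1 e2 e3 e4
        subst e1; subst e2; subst e3; subst e4
        exact Or.inr ⟨⟨_, hEF, h1⟩, ⟨_, hEF, h2⟩, ⟨_, hEF, h3⟩, ⟨_, hEF, h4⟩⟩

/-- For the free-symbol intruder `I_g`: if `g(t₁,t₂,t₃,t₄)` is
derivable from `E` and is not a syntactic subterm of any term of `E`, then
each of `t₁, t₂, t₃, t₄` is derivable from `E`. -/
theorem g_args_derivable
    (A : Type) (E : Set (GTerm A)) (t₁ t₂ t₃ t₄ : GTerm A)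
    (hder : GDerivable E (.g t₁ t₂ t₃ t₄))
    (hsub : ∀ u ∈ E, ¬ IsSub (.g t₁ t₂ t₃ t₄) u) :
    GDerivable E t₁ ∧ GDerivable E t₂ ∧ GDerivable E t₃ ∧ GDerivable E t₄ := by
  obtain ⟨F, hEF, hmem⟩ := hder
  rcases g_mem_aux hEF t₁ t₂ t₃ t₄ hmem with h | h
  · exact absurd (IsSub.refl _) (hsub _ h)
  · exact h
end

section
/- Uniqueness of collision decomposition: suppose words over an alphabet containing for each 4-tuple of words (a,b,c,d) a distinguished letter F(a,b,c,d), such that F(a,b,c,d) never occurs inside a, b, c or d (well-foundedness of the term structure). If t₁ · F(t₁,t₂,t₃,t₄) · t₂ = m₁ · F(m₁,m₂,m₃,m₄) · m₂, then t₁ = m₁, t₂ = m₂, t₃ = m₃ and t₄ = m₄. -/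
/-! If `t₁ ++ [F t] ++ t₂ = m₁ ++ [F m] ++ m₂` with `t₁` shorter than `m₁`, then `F t` lies in `m₁`
and `F m` lies in `t₂`, so `size (F t) < size (F m) < size (F t)`; by symmetry the two marked
letters sit at the same position, which gives `t₁ = m₁` and `F t = F m`, and injectivity of `F`
does the rest. -/

namespace List

variable {α : Type*}

theorem mem_and_mem_of_append_cons_eq_of_length_lt {u v u' v' : List α} {x y : α}
    (h : u ++ x :: v = u' ++ y :: v') (hlen : u.length < u'.length) : x ∈ u' ∧ y ∈ v := by
  rcases append_eq_append_iff.mp h with ⟨_ | ⟨b, c⟩, rfl, hv⟩ | ⟨c, rfl, -⟩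
  · simp at hlen
  · obtain ⟨rfl, rfl⟩ := cons_eq_cons.mp hv
    simp
  · simp at hlen

theorem append_cons_inj_of_forall_lt {β : Type*} [Preorder β] (f : α → β)
    {u v u' v' : List α} {x y : α} (hx : ∀ z ∈ u ++ v, f z < f x)
    (hy : ∀ z ∈ u' ++ v', f z < f y) (h : u ++ x :: v = u' ++ y :: v') :
    u = u' ∧ x = y ∧ v = v' := by
  rcases lt_trichotomy u.length u'.length with hlen | hlen | hlen
  · obtain ⟨hxu', hyv⟩ := mem_and_mem_of_append_cons_eq_of_length_lt h hlen
    exact absurd (hx y (mem_append_right u hyv)) (hy x (mem_append_left v' hxu')).asymm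
  · obtain ⟨rfl, hxv⟩ := append_inj h hlen
    simpa using hxv
  · obtain ⟨hyu, hxv'⟩ := mem_and_mem_of_append_cons_eq_of_length_lt h.symm hlen
    exact absurd (hy x (mem_append_right u' hxv')) (hx y (mem_append_left v hyu)).asymm

end List

theorem unique_collision_decomposition_general
    (A : Type)
    (F : List A → List A → List A → List A → A)
    (size : A → ℕ)
    -- the size of the letter `F(a,b,c,d)` exceeds the total size of `a,b,c,d`
    (hsize : ∀ a b c d : List A,
      ((a.map size).sum + (b.map size).sum + (c.map size).sum + (d.map size).sum)
        < size (F a b c d))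
    (hinj : ∀ a b c d a' b' c' d' : List A,
      F a b c d = F a' b' c' d' → a = a' ∧ b = b' ∧ c = c' ∧ d = d')
    (t₁ t₂ t₃ t₄ m₁ m₂ m₃ m₄ : List A)
    (heq : t₁ ++ [F t₁ t₂ t₃ t₄] ++ t₂ = m₁ ++ [F m₁ m₂ m₃ m₄] ++ m₂) :
    t₁ = m₁ ∧ t₂ = m₂ ∧ t₃ = m₃ ∧ t₄ = m₄ := by
  have size_lt : ∀ a b c d, ∀ z ∈ a ++ b, size z < size (F a b c d) := fun a b c d z hz => by
    have hz_le : size z ≤ ((a ++ b).map size).sum := List.le_sum_of_mem (List.mem_map_of_mem hz)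
    have := hsize a b c d
    simp only [List.map_append, List.sum_append] at hz_le
    omega
  obtain ⟨h₁, hF, -⟩ := List.append_cons_inj_of_forall_lt size (size_lt t₁ t₂ t₃ t₄ ·)
    (size_lt m₁ m₂ m₃ m₄ ·) (by simpa using heq)
  obtain ⟨-, h₂, h₃, h₄⟩ := hinj _ _ _ _ _ _ _ _ hF
  exact ⟨h₁, h₂, h₃, h₄⟩

/-- Uniqueness of collision decomposition.  Messages are words
over an alphabet `A`; `F` assigns to every 4-tuple of words a distinguished
letter.  A well-founded size function guarantees that the letter `F(a,b,c,d)`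
cannot occur in the words `a,b,c,d`.  Then a word can be written in the form
`t₁ · F(t₁,t₂,t₃,t₄) · t₂` in at most one way. -/
theorem unique_collision_decomposition
    (A : Type)
    (F : List A → List A → List A → List A → A)
    (size : A → ℕ)
    (hpos : ∀ a : A, 1 ≤ size a)
    -- the size of the letter `F(a,b,c,d)` exceeds the total size of `a,b,c,d`
    (hsize : ∀ a b c d : List A,
      ((a.map size).sum + (b.map size).sum + (c.map size).sum + (d.map size).sum)
        < size (F a b c d))
    (hinj : ∀ a b c d a' b' c' d' : List A,
      F a b c d = F a' b' c' d' → a = a' ∧ b = b' ∧ c = c' ∧ d = d')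
    (t₁ t₂ t₃ t₄ m₁ m₂ m₃ m₄ : List A)
    (heq : t₁ ++ [F t₁ t₂ t₃ t₄] ++ t₂ = m₁ ++ [F m₁ m₂ m₃ m₄] ++ m₂) :
    t₁ = m₁ ∧ t₂ = m₂ ∧ t₃ = m₃ ∧ t₄ = m₄ :=
  unique_collision_decomposition_general A F size hsize hinj t₁ t₂ t₃ t₄ m₁ m₂ m₃ m₄ heq
end

section
/- No triple collisions by iteration: with the setup of the collision rule HC identifying h(m₁ · G(m,m') · m₂) with h(m₁' · F(m,m') · m₂') for a single application, if h(u₁) ~ h(u₂) via one application of HC and h(u₂) ~ h(u₃) via one application of HC, and u₁ has the form t₁ · F(t₁,t₂,t₃,t₄) · t₂, then u₃ equals u₁ (as words). Hence iterating the collision rule from a term containing an F-letter returns to the original message and cannot produce a third distinct message with the same hash. -/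
/-- One application of the collision rule (HC): the word
`a · F(a,b,c,d) · b` and the word `c · G(a,b,c,d) · d` have the same hash,
in either direction. -/
inductive OneHC {A : Type}
    (F G : List A → List A → List A → List A → A) :
    List A → List A → Prop where
  | fg (a b c d : List A) :
      OneHC F G (a ++ [F a b c d] ++ b) (c ++ [G a b c d] ++ d)
  | gf (a b c d : List A) :
      OneHC F G (c ++ [G a b c d] ++ d) (a ++ [F a b c d] ++ b)

lemma OneHC_cases {A : Type} {F G : List A → List A → List A → List A → A}
    {v w : List A} (h : OneHC F G v w) :
    (∃ a b c d, v = a ++ [F a b c d] ++ b ∧ w = c ++ [G a b c d] ++ d) ∨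
    (∃ a b c d, v = c ++ [G a b c d] ++ d ∧ w = a ++ [F a b c d] ++ b) := by
  cases h with
  | fg a b c d => exact Or.inl ⟨a, b, c, d, rfl, rfl⟩
  | gf a b c d => exact Or.inr ⟨a, b, c, d, rfl, rfl⟩

/-- Splitting lemma: two decompositions of a word around single letters
either coincide, or each marked letter occurs inside the other decomposition. -/
lemma split_around {A : Type} {x y x' y' : List A} {p q : A}
    (h : x ++ [p] ++ y = x' ++ [q] ++ y') :
    (x = x' ∧ p = q ∧ y = y') ∨ (p ∈ x' ∧ q ∈ y) ∨ (q ∈ x ∧ p ∈ y') := by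
  have h' : x ++ (p :: y) = x' ++ (q :: y') := by simpa using h
  rcases List.append_eq_append_iff.mp h' with ⟨s, hx', hs⟩ | ⟨s, hx, hs⟩
  · cases s with
    | nil =>
        left
        simp at hx' hs
        exact ⟨hx'.symm, hs.1, hs.2⟩
    | cons e s' =>
        right; left
        obtain ⟨rfl, hy⟩ : p = e ∧ y = s' ++ q :: y' := by
          simpa using hs
        constructor
        · rw [hx']; simp
        · rw [hy]; simp
  · cases s with
    | nil =>
        left
        simp at hx hs
        exact ⟨hx, hs.1.symm, hs.2.symm⟩
    | cons e s' =>
        right; right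
        obtain ⟨rfl, hy'⟩ : q = e ∧ y' = s' ++ p :: y := by
          simpa using hs
        constructor
        · rw [hx]; simp
        · rw [hy']; simp

lemma size_le_of_mem {A : Type} (size : A → ℕ) {e : A} {l : List A}
    (h : e ∈ l) : size e ≤ (l.map size).sum :=
  List.single_le_sum (fun _ _ => Nat.zero_le _) _ (List.mem_map_of_mem (f := size) h)

/-- No triple collisions by iterating the collision rule:
under the well-foundedness and injectivity assumptions on the collision
letters `F` and `G` (disjoint ranges, letters not occurring in their own
arguments), if `h(u₁) ~ h(u₂)` and `h(u₂) ~ h(u₃)` each via one application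
of (HC), and `u₁ = t₁ · F(t₁,t₂,t₃,t₄) · t₂`, then `u₃ = u₁`: iteration
returns to the original message and cannot produce a third distinct message
with the same hash. -/
theorem no_triple_collision
    (A : Type)
    (F G : List A → List A → List A → List A → A)
    (size : A → ℕ)
    (hpos : ∀ a : A, 1 ≤ size a)
    (hsizeF : ∀ a b c d : List A,
      ((a.map size).sum + (b.map size).sum + (c.map size).sum + (d.map size).sum)
        < size (F a b c d))
    (hsizeG : ∀ a b c d : List A,
      ((a.map size).sum + (b.map size).sum + (c.map size).sum + (d.map size).sum)
        < size (G a b c d))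
    (hinjF : ∀ a b c d a' b' c' d' : List A,
      F a b c d = F a' b' c' d' → a = a' ∧ b = b' ∧ c = c' ∧ d = d')
    (hinjG : ∀ a b c d a' b' c' d' : List A,
      G a b c d = G a' b' c' d' → a = a' ∧ b = b' ∧ c = c' ∧ d = d')
    -- disjoint ranges
    (hdisj : ∀ a b c d a' b' c' d' : List A, F a b c d ≠ G a' b' c' d')
    (u₁ u₂ u₃ : List A)
    (h₁₂ : OneHC F G u₁ u₂) (h₂₃ : OneHC F G u₂ u₃)
    (t₁ t₂ t₃ t₄ : List A)
    (hu₁ : u₁ = t₁ ++ [F t₁ t₂ t₃ t₄] ++ t₂) :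
    u₃ = u₁ := by
  rcases OneHC_cases h₁₂ with ⟨a, b, c, d, hv, hw⟩ | ⟨a, b, c, d, hv, hw⟩
  · -- u₁ = a ++ [F a b c d] ++ b, u₂ = c ++ [G a b c d] ++ d
    rcases OneHC_cases h₂₃ with ⟨a', b', c', d', hv', hw'⟩ | ⟨a', b', c', d', hv', hw'⟩
    · -- c ++ [G a b c d] ++ d = a' ++ [F a' b' c' d'] ++ b' : impossible
      exfalso
      rcases split_around (hw ▸ hv' : c ++ [G a b c d] ++ d = a' ++ [F a' b' c' d'] ++ b')
        with ⟨_, heq, _⟩ | ⟨hGa, hFd⟩ | ⟨hFc, hGb⟩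
      · exact hdisj a' b' c' d' a b c d heq.symm
      · have h1 : size (G a b c d) ≤ (a'.map size).sum := size_le_of_mem size hGa
        have h2 : size (F a' b' c' d') ≤ (d.map size).sum := size_le_of_mem size hFd
        have h3 := hsizeF a' b' c' d'
        have h4 := hsizeG a b c d
        omega
      · have h1 : size (F a' b' c' d') ≤ (c.map size).sum := size_le_of_mem size hFc
        have h2 : size (G a b c d) ≤ (b'.map size).sum := size_le_of_mem size hGb
        have h3 := hsizeF a' b' c' d'
        have h4 := hsizeG a b c d
        omega
    · -- c ++ [G a b c d] ++ d = c' ++ [G a' b' c' d'] ++ d'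
      rcases split_around (hw ▸ hv' : c ++ [G a b c d] ++ d = c' ++ [G a' b' c' d'] ++ d')
        with ⟨hc, heq, hd⟩ | ⟨hG1, hG2⟩ | ⟨hG2, hG1⟩
      · obtain ⟨rfl, rfl, rfl, rfl⟩ := hinjG _ _ _ _ _ _ _ _ heq
        rw [hw', hv]
      · exfalso
        have h1 : size (G a b c d) ≤ (c'.map size).sum := size_le_of_mem size hG1
        have h2 : size (G a' b' c' d') ≤ (d.map size).sum := size_le_of_mem size hG2
        have h3 := hsizeG a b c d
        have h4 := hsizeG a' b' c' d'
        omega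
      · exfalso
        have h1 : size (G a' b' c' d') ≤ (c.map size).sum := size_le_of_mem size hG2
        have h2 : size (G a b c d) ≤ (d'.map size).sum := size_le_of_mem size hG1
        have h3 := hsizeG a b c d
        have h4 := hsizeG a' b' c' d'
        omega
  · -- u₁ = c ++ [G a b c d] ++ d, but u₁ = t₁ ++ [F ...] ++ t₂ : impossible
    exfalso
    rcases split_around (hv ▸ hu₁ : c ++ [G a b c d] ++ d = t₁ ++ [F t₁ t₂ t₃ t₄] ++ t₂)
      with ⟨_, heq, _⟩ | ⟨hGt, hFd⟩ | ⟨hFc, hGt⟩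
    · exact hdisj t₁ t₂ t₃ t₄ a b c d heq.symm
    · have h1 : size (G a b c d) ≤ (t₁.map size).sum := size_le_of_mem size hGt
      have h2 : size (F t₁ t₂ t₃ t₄) ≤ (d.map size).sum := size_le_of_mem size hFd
      have h3 := hsizeF t₁ t₂ t₃ t₄
      have h4 := hsizeG a b c d
      omega
    · have h1 : size (F t₁ t₂ t₃ t₄) ≤ (c.map size).sum := size_le_of_mem size hFc
      have h2 : size (G a b c d) ≤ (t₂.map size).sum := size_le_of_mem size hGt
      have h3 := hsizeF t₁ t₂ t₃ t₄
      have h4 := hsizeG a b c d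
      omega
end
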